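/- arXiv:2003.06341 — 4 statements merged into one kernel-verified Lean document; each statement's English description precedes it below -/
import Mathlib

section
/- Consider the SIS model under multi-layer Markovian mobility, with F* = F(v), L* = L(v), M = I − F*, and fix the infection rates β_i > 0. Let w ≫ 0 be a left null vector of B M + L* normalized so max_k w_k = 1, W = diag(w), and λ₂ the second smallest eigenvalue of (1/2)(W(B M + L*) + (B M + L*)^⊤ W) (these depend only on B, M, L*, not on the recovery rates). Fix a patch i* ∈ {1,…,n} and a real number s with s > −λ₂/(4mn + 1) and β_{i*} + s ≥ 0. Then there exist recovery rates δ_i ≥ 0, i ∈ {1,…,n}, with δ_{i*} − β_{i*} = s = min_i(δ_i − β_i) and D − B − sI ≠ 0, such that λ₂ / ((1 + √(1 + λ₂/Σ_k w_k(δ_k − β_k − s)))² · nm + 1) + s ≥ 0, where the sum runs over all nm block-extended indices k. -/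
open Matrix Finset Filter

namespace SISMobility

/-- Index type for (class, patch) pairs: `(α, i)` with `α ∈ {1,…,m}` a class and
`i ∈ {1,…,n}` a patch. -/
abbrev Idx (n m : ℕ) := Fin m × Fin n

/-- A CTMC generator matrix: nonnegative off-diagonal entries and zero row sums
(so that the diagonal entry is minus the total outgoing rate). -/
def IsGenerator {n : ℕ} (Q : Matrix (Fin n) (Fin n) ℝ) : Prop :=
  (∀ i j, i ≠ j → 0 ≤ Q i j) ∧ ∀ i, ∑ j, Q i j = 0

/-- Strong connectivity of the digraph on `{1,…,n}` with an edge `(i,j)` whenever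
`i ≠ j` and `Q i j > 0`. -/
def StronglyConnected {n : ℕ} (Q : Matrix (Fin n) (Fin n) ℝ) : Prop :=
  ∀ i j : Fin n, Relation.ReflTransGen (fun a b => a ≠ b ∧ 0 < Q a b) i j

/-- The `nm × nm` block-diagonal infection-rate matrix `B` (m copies of `diag β`). -/
noncomputable def Bmat (n m : ℕ) (β : Fin n → ℝ) : Matrix (Idx n m) (Idx n m) ℝ :=
  Matrix.diagonal fun k => β k.2

/-- The `nm × nm` block-diagonal recovery-rate matrix `D` (m copies of `diag δ`). -/
noncomputable def Dmat (n m : ℕ) (δ : Fin n → ℝ) : Matrix (Idx n m) (Idx n m) ℝ :=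
  Matrix.diagonal fun k => δ k.2

/-- The block-diagonal mobility matrix `L(x)`: the `α`-block has entries
`l^α_{ii} = ∑_{j≠i} q^α_{ji} x^α_j / x^α_i` and `l^α_{ij} = -q^α_{ji} x^α_j / x^α_i`. -/
noncomputable def Lmat {n m : ℕ} (Q : Fin m → Matrix (Fin n) (Fin n) ℝ)
    (x : Idx n m → ℝ) : Matrix (Idx n m) (Idx n m) ℝ :=
  fun k l =>
    if k.1 = l.1 then
      if k.2 = l.2 then ∑ j ∈ Finset.univ.filter (· ≠ k.2), Q k.1 j k.2 * x (k.1, j) / x k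
      else -(Q k.1 l.2 k.2 * x (k.1, l.2) / x k)
    else 0

/-- The population-fraction matrix `F(x)`: entry `((α,i),(γ,j))` equals
`x^γ_i / ∑_η x^η_i` if `j = i` and `0` otherwise. -/
noncomputable def Fmat {n m : ℕ} (x : Idx n m → ℝ) : Matrix (Idx n m) (Idx n m) ℝ :=
  fun k l => if l.2 = k.2 then x (l.1, k.2) / ∑ η : Fin m, x (η, k.2) else 0

/-- Right-hand side of the infection dynamics
`ṗ = (B F(x) − D − L(x)) p − diag(p) B F(x) p`. -/
noncomputable def pRHS {n m : ℕ} (β δ : Fin n → ℝ) (Q : Fin m → Matrix (Fin n) (Fin n) ℝ)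
    (x p : Idx n m → ℝ) : Idx n m → ℝ :=
  (Bmat n m β * Fmat x - Dmat n m δ - Lmat Q x).mulVec p -
    (Matrix.diagonal p * (Bmat n m β * Fmat x)).mulVec p

/-- Right-hand side of the mobility dynamics `ẋ^α = (Q^α)ᵀ x^α`. -/
noncomputable def xRHS {n m : ℕ} (Q : Fin m → Matrix (Fin n) (Fin n) ℝ)
    (x : Idx n m → ℝ) : Idx n m → ℝ :=
  fun k => ∑ j, Q k.1 j k.2 * x (k.1, j)

/-- `(p, x)` is a solution of the SIS model under multi-layer Markovian mobility. -/
def IsSolution {n m : ℕ} (β δ : Fin n → ℝ) (Q : Fin m → Matrix (Fin n) (Fin n) ℝ)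
    (p x : ℝ → Idx n m → ℝ) : Prop :=
  ∀ t : ℝ, 0 ≤ t → ∀ k : Idx n m,
    HasDerivAt (fun s => p s k) (pRHS β δ Q (x t) (p t) k) t ∧
    HasDerivAt (fun s => x s k) (xRHS Q (x t) k) t

/-- The radial abscissa `μ(G)`: the largest real part of a (complex) eigenvalue of a
real matrix `G`. -/
noncomputable def muMax {ι : Type*} [Fintype ι] [DecidableEq ι] (G : Matrix ι ι ℝ) : ℝ :=
  sSup (Complex.re '' spectrum ℂ (G.map (algebraMap ℝ ℂ)))

/-- The spectral radius `ρ(G)` of a real matrix `G`. -/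
noncomputable def specRad {ι : Type*} [Fintype ι] [DecidableEq ι] (G : Matrix ι ι ℝ) : ℝ :=
  sSup ((fun z : ℂ => ‖z‖) '' spectrum ℂ (G.map (algebraMap ℝ ℂ)))

/-- The fixed-point map `H(p) = (I + A(diag p + (I − diag p) M))⁻¹ A p`. -/
noncomputable def Hfun {n m : ℕ} (A M : Matrix (Idx n m) (Idx n m) ℝ)
    (p : Idx n m → ℝ) : Idx n m → ℝ :=
  ((1 + A * (Matrix.diagonal p + (1 - Matrix.diagonal p) * M))⁻¹).mulVec (A.mulVec p)

end SISMobility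

open SISMobility

/-! Take `δ_i = β_i + s` at `i*` and `δ_i = β_i + s + c` at every other patch. The weighted sum
`∑_k w_k (δ_k - β_k - s)` is then `c` times the (positive) `w`-mass off patch `i*`, so it grows
without bound with `c`; the square root tends to `1`, and the left-hand side of the `λ₂`
condition tends to `λ₂ / (4mn + 1) + s`, which is positive by the choice of `s`. -/

open Topology

lemma tendsto_lambda2_bound (lam2 s N : ℝ) (hN : 0 ≤ N) :
    Tendsto (fun P : ℝ => lam2 / ((1 + √(1 + lam2 / P)) ^ 2 * N + 1) + s) atTop
      (𝓝 (lam2 / (4 * N + 1) + s)) := by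
  have hsqrt : Tendsto (fun P : ℝ => √(1 + lam2 / P)) atTop (𝓝 1) := by
    simpa using ((tendsto_const_nhds.div_atTop tendsto_id).const_add 1).sqrt
  have hden : Tendsto (fun P : ℝ => (1 + √(1 + lam2 / P)) ^ 2 * N + 1) atTop
      (𝓝 (4 * N + 1)) := by
    convert (((tendsto_const_nhds.add hsqrt).pow 2).mul_const N).add_const 1 using 2
    norm_num
  exact (tendsto_const_nhds.div hden (by positivity)).add_const s

theorem lambda2_condition_satisfiable_general
    (n m : ℕ) (hn : 2 ≤ n) (hm : 1 ≤ m)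
    (β : Fin n → ℝ) (hβ : ∀ i, 0 < β i)
    (w : Idx n m → ℝ) (hwpos : ∀ k, 0 < w k)
    (lam2 : ℝ)
    -- fixed patch and value of the minimal recovery deficit
    (istar : Fin n) (s : ℝ)
    (hss : -lam2 / (4 * (m : ℝ) * n + 1) < s)
    (hβs : 0 ≤ β istar + s) :
    ∃ δ : Fin n → ℝ, (∀ i, 0 ≤ δ i) ∧
      δ istar - β istar = s ∧ (∀ i, s ≤ δ i - β i) ∧
      Dmat n m δ - Bmat n m β - s • (1 : Matrix (Idx n m) (Idx n m) ℝ) ≠ 0 ∧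
      0 ≤ lam2 /
          ((1 + Real.sqrt (1 + lam2 / ∑ k : Idx n m, w k * (δ k.2 - β k.2 - s))) ^ 2
            * (n * m : ℝ) + 1) + s := by
  have : Nontrivial (Fin n) := Fin.nontrivial_iff_two_le.mpr hn
  obtain ⟨j, hj⟩ := exists_ne istar
  let α : Fin m := ⟨0, hm⟩
  set W := ∑ k : Idx n m with k.2 ≠ istar, w k
  have hW : 0 < W := Finset.sum_pos (fun k _ => hwpos k) ⟨(α, j), by simp [hj]⟩
  have hlim : 0 < lam2 / (4 * ((n : ℝ) * m) + 1) + s := by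
    rw [show 4 * ((n : ℝ) * m) = 4 * m * n by ring, ← neg_lt_iff_pos_add, neg_lt, ← neg_div]
    exact hss
  obtain ⟨c, hc0, hcs, hc⟩ := ((eventually_gt_atTop 0).and ((eventually_ge_atTop (-s)).and
    (((tendsto_lambda2_bound lam2 s _ (by positivity)).comp
      (tendsto_id.atTop_mul_const hW)).eventually (lt_mem_nhds hlim)))).exists
  set δ : Fin n → ℝ := fun i => β i + s + if i = istar then 0 else c
  have hsum : ∑ k : Idx n m, w k * (δ k.2 - β k.2 - s) = c * W := by
    rw [Finset.mul_sum, Finset.sum_filter]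
    refine Finset.sum_congr rfl fun k _ => ?_
    by_cases hk : k.2 = istar
    · simp [δ, hk]
    · simp only [δ, hk, if_false, ne_eq, not_false_eq_true, if_true]
      ring
  refine ⟨δ, fun i => ?_, by simp [δ], fun i => ?_, fun h => ?_, ?_⟩
  · by_cases hi : i = istar
    · simp [δ, hi, hβs]
    · simp only [δ, hi, if_false]
      linarith [hβ i]
  · by_cases hi : i = istar
    · simp [δ, hi]
    · simp only [δ, hi, if_false]
      linarith
  · have hjj := congrFun (congrFun h (α, j)) (α, j)
    simp [Dmat, Bmat, δ, hj] at hjj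
    linarith
  · rw [hsum]
    exact hc.le

/-- Remark 1: fix the infection rates `β`, a patch `i*` and a real
`s` with `s > −λ₂/(4mn + 1)` and `β_{i*} + s ≥ 0`, where `w` and `λ₂` are determined
by `K = B M + L*` alone. Then there exist recovery rates `δ_i ≥ 0` with
`δ_{i*} − β_{i*} = s = min_i(δ_i − β_i)` and `D − B − sI ≠ 0` satisfying the `λ₂`
sufficient condition of Corollary 1 (iv). -/
theorem lambda2_condition_satisfiable
    (n m : ℕ) (hn : 2 ≤ n) (hm : 1 ≤ m)
    (Q : Fin m → Matrix (Fin n) (Fin n) ℝ)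
    (hQgen : ∀ α, IsGenerator (Q α)) (hQirr : ∀ α, StronglyConnected (Q α))
    (β : Fin n → ℝ) (hβ : ∀ i, 0 < β i)
    (vα : Fin m → Fin n → ℝ) (hvαpos : ∀ α i, 0 < vα α i)
    (hvαnorm : ∀ α, ∑ i, vα α i = 1)
    (hvαeig : ∀ α i, ∑ j, Q α j i * vα α j = 0)
    (Npop : Fin m → ℝ) (hNpop : ∀ α, 0 < Npop α)
    (v : Idx n m → ℝ) (hv : ∀ k, v k = Npop k.1 * vα k.1 k.2)
    -- `K = B M + L*` with `M = I − F*` (independent of the recovery rates)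
    (K : Matrix (Idx n m) (Idx n m) ℝ)
    (hK : K = Bmat n m β * (1 - Fmat v) + Lmat Q v)
    -- `w ≫ 0` left null vector of `K`, normalized so that `max_k w_k = 1`
    (w : Idx n m → ℝ) (hwpos : ∀ k, 0 < w k)
    (hwnull : Matrix.vecMul w K = 0)
    (hwle : ∀ k, w k ≤ 1) (hwmax : ∃ k, w k = 1)
    -- `λ₂` is the second smallest eigenvalue of `(1/2)(W K + Kᵀ W)`
    (S : Matrix (Idx n m) (Idx n m) ℝ)
    (hSdef : S = (1 / 2 : ℝ) • (Matrix.diagonal w * K + Kᵀ * Matrix.diagonal w))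
    (hS : S.IsHermitian)
    (lam2 : ℝ)
    (hlam2 : lam2 = (Multiset.sort (Finset.univ.val.map hS.eigenvalues) (· ≤ ·)).getD 1 0)
    -- fixed patch and value of the minimal recovery deficit
    (istar : Fin n) (s : ℝ)
    (hss : -lam2 / (4 * (m : ℝ) * n + 1) < s)
    (hβs : 0 ≤ β istar + s) :
    ∃ δ : Fin n → ℝ, (∀ i, 0 ≤ δ i) ∧
      δ istar - β istar = s ∧ (∀ i, s ≤ δ i - β i) ∧
      Dmat n m δ - Bmat n m β - s • (1 : Matrix (Idx n m) (Idx n m) ℝ) ≠ 0 ∧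
      0 ≤ lam2 /
          ((1 + Real.sqrt (1 + lam2 / ∑ k : Idx n m, w k * (δ k.2 - β k.2 - s))) ^ 2
            * (n * m : ℝ) + 1) + s :=
  lambda2_condition_satisfiable_general n m hn hm β hβ w hwpos lam2 istar s hss hβs
end

section
/- Let N ≥ 2 and let L ∈ ℝ^{N×N} be an irreducible Laplacian matrix, i.e., its off-diagonal entries are nonpositive, each row of L sums to zero, and the digraph on {1,…,N} with an edge (i,j) whenever i ≠ j and L_{ij} ≠ 0 is strongly connected. Let Δ ∈ ℝ^{N×N} be a nonnegative diagonal matrix with at least one strictly positive diagonal entry. Then every eigenvalue of L + Δ has strictly positive real part; in particular L + Δ is invertible and (L + Δ)^{-1} is entrywise positive. -/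
/-!
`A = L + diag Δ` is an irreducible Z-matrix whose row sums `Δ i` are nonnegative and somewhere
positive. Such a matrix obeys a strong minimum principle: if `A u ≥ 0` and `u` has a nonpositive
entry, then at a minimum `u i = m ≤ 0` the identity `(A u) i = ∑ₖ A i k (u k - m) + m ∑ₖ A i k`
writes a nonnegative number as a sum of two nonpositive ones, so `u` equals `m` at every
out-neighbour of `i`, hence by irreducibility everywhere, and the positive row sum forces `m = 0`.
Applied to `±v` with `A v = 0` this gives invertibility, and applied to a column of `A⁻¹` it gives
positivity of the inverse. Finally, Gershgorin's discs `‖z - A k k‖ ≤ ∑_{j ≠ k} |A k j| ≤ A k k`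
lie in the closed right half-plane and touch the imaginary axis only at `0`, which is not an
eigenvalue.
-/

open Matrix Finset Filter

open SISMobility

theorem Complex.re_pos_of_norm_sub_ofReal_le {z : ℂ} {a : ℝ} (hz : ‖z - a‖ ≤ a) (hz0 : z ≠ 0) :
    0 < z.re := by
  have ha : 0 ≤ a := (norm_nonneg _).trans hz
  have hsq : (z.re - a) ^ 2 + z.im ^ 2 ≤ a ^ 2 := by
    have := pow_le_pow_left₀ (norm_nonneg _) hz 2
    rwa [← Complex.normSq_eq_norm_sq, Complex.normSq_apply, Complex.sub_re, Complex.sub_im,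
      Complex.ofReal_re, Complex.ofReal_im, sub_zero, ← sq, ← sq] at this
  by_contra! hre
  have hre0 : z.re = 0 := by nlinarith [sq_nonneg z.re, sq_nonneg z.im]
  have him0 : z.im = 0 := by nlinarith [sq_nonneg z.im]
  exact hz0 (Complex.ext hre0 him0)

namespace Matrix

variable {n : Type*} [Fintype n] {A : Matrix n n ℝ}

theorem mulVec_apply_eq_sum_mul_sub_add (A : Matrix n n ℝ) (u : n → ℝ) (i : n) (m : ℝ) :
    (A *ᵥ u) i = ∑ k, A i k * (u k - m) + m * ∑ k, A i k := by
  simp only [mulVec, dotProduct, mul_sub, sum_sub_distrib, ← sum_mul]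
  ring

theorem apply_eq_of_isMin_of_mulVec_nonneg (hoff : ∀ i j, i ≠ j → A i j ≤ 0)
    (hrow : ∀ i, 0 ≤ ∑ j, A i j) {u : n → ℝ} (hAu : 0 ≤ A *ᵥ u) {i : n} (hui : u i ≤ 0)
    (hmin : ∀ k, u i ≤ u k) :
    (∀ k, A i k ≠ 0 → u k = u i) ∧ u i * ∑ k, A i k = 0 := by
  have hterm : ∀ k, A i k * (u k - u i) ≤ 0 := fun k => by
    rcases eq_or_ne i k with rfl | hik
    · simp
    · exact mul_nonpos_of_nonpos_of_nonneg (hoff i k hik) (sub_nonneg.2 (hmin k))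
  have hsum : ∑ k, A i k * (u k - u i) ≤ 0 := sum_nonpos fun k _ => hterm k
  have hdiag : u i * ∑ k, A i k ≤ 0 := mul_nonpos_of_nonpos_of_nonneg hui (hrow i)
  have hAui : 0 ≤ ∑ k, A i k * (u k - u i) + u i * ∑ k, A i k := by
    rw [← mulVec_apply_eq_sum_mul_sub_add]; exact hAu i
  refine ⟨fun k hk => ?_, by linarith⟩
  have := (sum_eq_zero_iff_of_nonpos fun k _ => hterm k).1 (by linarith) k (mem_univ k)
  linarith [(mul_eq_zero.1 this).resolve_left hk]

theorem apply_eq_of_isMin_of_mulVec_nonneg_of_irreducible (hoff : ∀ i j, i ≠ j → A i j ≤ 0)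
    (hrow : ∀ i, 0 ≤ ∑ j, A i j)
    (hirr : ∀ i j, Relation.ReflTransGen (fun a b => a ≠ b ∧ A a b ≠ 0) i j)
    {u : n → ℝ} (hAu : 0 ≤ A *ᵥ u) {i : n} (hui : u i ≤ 0) (hmin : ∀ k, u i ≤ u k) (j : n) :
    u j = u i := by
  induction hirr i j with
  | refl => rfl
  | tail _ hbc ih =>
    rw [← ih] at hui hmin ⊢
    exact (apply_eq_of_isMin_of_mulVec_nonneg hoff hrow hAu hui hmin).1 _ hbc.2

theorem exists_norm_sub_diag_le_of_mem_spectrum [DecidableEq n]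
    (hoff : ∀ i j, i ≠ j → A i j ≤ 0) (hrow : ∀ i, 0 ≤ ∑ j, A i j) {z : ℂ}
    (hz : z ∈ spectrum ℂ (A.map (algebraMap ℝ ℂ))) : ∃ k, ‖z - A k k‖ ≤ A k k := by
  rw [← spectrum_toLin', ← Module.End.hasEigenvalue_iff_mem_spectrum] at hz
  obtain ⟨k, hk⟩ := eigenvalue_mem_ball hz
  refine ⟨k, (mem_closedBall_iff_norm.1 hk).trans ?_⟩
  have hsplit := add_sum_erase univ (A k) (mem_univ k)
  have hoffk : ∀ j ∈ univ.erase k, ‖(A.map (algebraMap ℝ ℂ)) k j‖ = -A k j := fun j hj => by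
    rw [map_apply, Complex.coe_algebraMap, Complex.norm_real, Real.norm_eq_abs,
      abs_of_nonpos (hoff k j (ne_of_mem_erase hj).symm)]
  rw [sum_congr rfl hoffk, sum_neg_distrib]
  linarith [hrow k]

/-- Since `∑ j, A i j = A i i - ∑_{j ≠ i} |A i j|` for a Z-matrix, these are the irreducibly
diagonally dominant Z-matrices (in the sense of Varga), the dominance being strict in some row. -/
structure IsIrreduciblyDiagDominantZMatrix (A : Matrix n n ℝ) : Prop where
  off_diag_nonpos : ∀ i j, i ≠ j → A i j ≤ 0
  row_sum_nonneg : ∀ i, 0 ≤ ∑ j, A i j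
  exists_row_sum_pos : ∃ i, 0 < ∑ j, A i j
  irreducible : ∀ i j, Relation.ReflTransGen (fun a b => a ≠ b ∧ A a b ≠ 0) i j

namespace IsIrreduciblyDiagDominantZMatrix

theorem eq_zero_of_mulVec_nonneg_of_apply_nonpos (hA : A.IsIrreduciblyDiagDominantZMatrix)
    {u : n → ℝ} (hAu : 0 ≤ A *ᵥ u) {r : n} (hr : u r ≤ 0) : u = 0 := by
  have : Nonempty n := ⟨r⟩
  obtain ⟨i, hmin⟩ := Finite.exists_min u
  have hconst := apply_eq_of_isMin_of_mulVec_nonneg_of_irreducible hA.off_diag_nonpos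
    hA.row_sum_nonneg hA.irreducible hAu ((hmin r).trans hr) hmin
  obtain ⟨p, hp⟩ := hA.exists_row_sum_pos
  have hminp : ∀ k, u p ≤ u k := by rw [hconst p]; exact hmin
  have hup := (apply_eq_of_isMin_of_mulVec_nonneg hA.off_diag_nonpos hA.row_sum_nonneg hAu
    ((hminp r).trans hr) hminp).2
  have hu0 : u p = 0 := (mul_eq_zero.1 hup).resolve_right hp.ne'
  funext j
  rw [hconst j, ← hconst p, hu0, Pi.zero_apply]

theorem isUnit [DecidableEq n] (hA : A.IsIrreduciblyDiagDominantZMatrix) : IsUnit A := by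
  refine mulVec_injective_iff_isUnit.1 ((injective_iff_map_eq_zero A.mulVecLin).2 fun v hv => ?_)
  obtain ⟨r, -⟩ := hA.exists_row_sum_pos
  rw [mulVecLin_apply] at hv
  rcases le_total (v r) 0 with hr | hr
  · exact hA.eq_zero_of_mulVec_nonneg_of_apply_nonpos hv.ge hr
  · have hneg : 0 ≤ A *ᵥ -v := by rw [mulVec_neg, hv, neg_zero]
    exact neg_eq_zero.1 (hA.eq_zero_of_mulVec_nonneg_of_apply_nonpos hneg (neg_nonpos.2 hr))

theorem inv_apply_pos [DecidableEq n] (hA : A.IsIrreduciblyDiagDominantZMatrix) (i j : n) :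
    0 < A⁻¹ i j := by
  have hcol : A *ᵥ (A⁻¹ *ᵥ Pi.single j 1) = Pi.single j 1 := by
    rw [mulVec_mulVec, mul_nonsing_inv A ((isUnit_iff_isUnit_det A).1 hA.isUnit), one_mulVec]
  by_contra! hij
  have hzero := hA.eq_zero_of_mulVec_nonneg_of_apply_nonpos
    (hcol ▸ Pi.single_nonneg.2 zero_le_one)
    (by rwa [mulVec_single_one])
  rw [hzero, mulVec_zero] at hcol
  simpa using congrFun hcol j

theorem re_pos_of_mem_spectrum [DecidableEq n] (hA : A.IsIrreduciblyDiagDominantZMatrix)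
    {z : ℂ} (hz : z ∈ spectrum ℂ (A.map (algebraMap ℝ ℂ))) : 0 < z.re := by
  have hz0 : z ≠ 0 := by
    rintro rfl
    exact (spectrum.zero_mem_iff ℂ).1 hz (hA.isUnit.map (algebraMap ℝ ℂ).mapMatrix)
  obtain ⟨k, hk⟩ := exists_norm_sub_diag_le_of_mem_spectrum hA.off_diag_nonpos
    hA.row_sum_nonneg hz
  exact Complex.re_pos_of_norm_sub_ofReal_le hk hz0

end IsIrreduciblyDiagDominantZMatrix

end Matrix

theorem perturbed_irreducible_laplacian_M_matrix_general
    (N : ℕ) (L : Matrix (Fin N) (Fin N) ℝ)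
    (hLoff : ∀ i j, i ≠ j → L i j ≤ 0)
    (hLrow : ∀ i, ∑ j, L i j = 0)
    (hLirr : ∀ i j : Fin N, Relation.ReflTransGen (fun a b => a ≠ b ∧ L a b ≠ 0) i j)
    (Δ : Fin N → ℝ) (hΔ : ∀ i, 0 ≤ Δ i) (hΔpos : ∃ i, 0 < Δ i) :
    (∀ z ∈ spectrum ℂ ((L + Matrix.diagonal Δ).map (algebraMap ℝ ℂ)), 0 < z.re) ∧
    IsUnit (L + Matrix.diagonal Δ).det ∧
    (∀ i j, 0 < (L + Matrix.diagonal Δ)⁻¹ i j) := by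
  have hoff : ∀ i j, i ≠ j → (L + diagonal Δ) i j = L i j := fun i j hij => by
    simp [diagonal_apply_ne _ hij]
  have hrow : ∀ i, ∑ j, (L + diagonal Δ) i j = Δ i := fun i => by
    simp [sum_add_distrib, hLrow, diagonal_apply]
  have hA : (L + diagonal Δ).IsIrreduciblyDiagDominantZMatrix :=
    { off_diag_nonpos := fun i j hij => hoff i j hij ▸ hLoff i j hij
      row_sum_nonneg := fun i => hrow i ▸ hΔ i
      exists_row_sum_pos := hΔpos.imp fun i hi => hrow i ▸ hi
      irreducible := fun i j => Relation.ReflTransGen.mono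
        (fun a b hab => ⟨hab.1, (hoff a b hab.1).symm ▸ hab.2⟩) i j (hLirr i j) }
  exact ⟨fun z => hA.re_pos_of_mem_spectrum, (isUnit_iff_isUnit_det _).1 hA.isUnit,
    hA.inv_apply_pos⟩

/-- an irreducible Laplacian matrix perturbed by a nonnegative
diagonal matrix with at least one positive entry is a nonsingular M-matrix: every
eigenvalue has strictly positive real part, the matrix is invertible, and its
inverse is entrywise positive. -/
theorem perturbed_irreducible_laplacian_M_matrix
    (N : ℕ) (hN : 2 ≤ N) (L : Matrix (Fin N) (Fin N) ℝ)
    (hLoff : ∀ i j, i ≠ j → L i j ≤ 0)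
    (hLrow : ∀ i, ∑ j, L i j = 0)
    (hLirr : ∀ i j : Fin N, Relation.ReflTransGen (fun a b => a ≠ b ∧ L a b ≠ 0) i j)
    (Δ : Fin N → ℝ) (hΔ : ∀ i, 0 ≤ Δ i) (hΔpos : ∃ i, 0 < Δ i) :
    (∀ z ∈ spectrum ℂ ((L + Matrix.diagonal Δ).map (algebraMap ℝ ℂ)), 0 < z.re) ∧
    IsUnit (L + Matrix.diagonal Δ).det ∧
    (∀ i j, 0 < (L + Matrix.diagonal Δ)⁻¹ i j) :=
  perturbed_irreducible_laplacian_M_matrix_general N L hLoff hLrow hLirr Δ hΔ hΔpos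
end

section
/- Consider the SIS model under multi-layer Markovian mobility, with F* = F(v) and L* = L(v), and assume δ_i > 0 for at least one patch i. Then L* + D is invertible, the matrix A = (L* + D)^{-1} B is block-diagonal with each n×n diagonal block entrywise positive, and the product A F* is entrywise positive (in particular, A F* is an irreducible nonnegative matrix). -/
open Matrix Finset Filter

/-! The matrix `E = L(v) + D` is a Z-matrix: its off-diagonal entries are `≤ 0`, its row sums
are `δ_i ≥ 0` (those of `L(x)` vanish for every positive `x`), and within a class its negative
entries are the reversed edges of the strongly connected digraph of `Q^α`, so every index is
joined to a row `i` with `δ_i > 0`. For such a matrix a discrete minimum principle holds: if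
`E x ≥ 0`, a nonpositive minimum of `x` spreads along these edges and contradicts a positive row
sum. Hence `E x ≥ 0 → x ≥ 0`, so `E` is invertible with `E⁻¹ ≥ 0`, and a zero entry in a column
of `E⁻¹` would spread through the whole class, which makes the diagonal blocks positive.
`E⁻¹` is block diagonal because it commutes with the projections onto the classes. Every entry
of `A F*` is a sum of nonnegative terms, one of which is positive. -/

open Relation

namespace Matrix

variable {ι : Type*} {M : Matrix ι ι ℝ} {x : ι → ℝ} {i j : ι}

theorem mul_sub_nonpos_of_forall_le (hZ : ∀ i j, i ≠ j → M i j ≤ 0) (hmin : ∀ j, x i ≤ x j)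
    (j : ι) : M i j * (x j - x i) ≤ 0 := by
  rcases eq_or_ne i j with rfl | hij
  · simp
  · exact mul_nonpos_of_nonpos_of_nonneg (hZ i j hij) (sub_nonneg.2 (hmin j))

variable [Fintype ι]

theorem mulVec_apply_eq_sum_mul_sub_add_s13 (M : Matrix ι ι ℝ) (x : ι → ℝ) (i : ι) :
    (M *ᵥ x) i = ∑ j, M i j * (x j - x i) + (∑ j, M i j) * x i := by
  simp only [mulVec, dotProduct, mul_sub, sum_sub_distrib, sum_mul]
  ring

theorem mulVec_apply_le_of_forall_le (hZ : ∀ i j, i ≠ j → M i j ≤ 0) (hmin : ∀ j, x i ≤ x j) :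
    (M *ᵥ x) i ≤ (∑ j, M i j) * x i := by
  rw [mulVec_apply_eq_sum_mul_sub_add_s13]
  linarith [sum_nonpos fun j (_ : j ∈ univ) => mul_sub_nonpos_of_forall_le hZ hmin j]

theorem apply_eq_of_forall_le_of_neg (hZ : ∀ i j, i ≠ j → M i j ≤ 0) (hrow : 0 ≤ ∑ j, M i j)
    (hMx : 0 ≤ (M *ᵥ x) i) (hmin : ∀ j, x i ≤ x j) (hxi : x i ≤ 0) (hij : M i j < 0) :
    x j = x i := by
  by_contra hne
  have hlt : ∑ k, M i k * (x k - x i) < 0 :=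
    sum_neg' (fun k _ => mul_sub_nonpos_of_forall_le hZ hmin k)
      ⟨j, mem_univ j, mul_neg_of_neg_of_pos hij (sub_pos.2 ((hmin j).lt_of_ne' hne))⟩
  have := mulVec_apply_eq_sum_mul_sub_add_s13 M x i
  nlinarith [mul_nonpos_of_nonneg_of_nonpos hrow hxi]

theorem apply_eq_of_forall_le_of_reflTransGen (hZ : ∀ i j, i ≠ j → M i j ≤ 0)
    (hrow : ∀ i, 0 ≤ ∑ j, M i j) (hMx : 0 ≤ M *ᵥ x) (hmin : ∀ j, x i ≤ x j) (hxi : x i ≤ 0)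
    (hij : ReflTransGen (fun a b => M a b < 0) i j) : x j = x i := by
  induction hij with
  | refl => rfl
  | tail _ hbc ih =>
    rw [← ih] at hmin hxi ⊢
    exact apply_eq_of_forall_le_of_neg hZ (hrow _) (hMx _) hmin hxi hbc

structure IsWeaklyChainedDiagDominantZMatrix (M : Matrix ι ι ℝ) : Prop where
  offDiag_nonpos : ∀ i j, i ≠ j → M i j ≤ 0
  rowSum_nonneg : ∀ i, 0 ≤ ∑ j, M i j
  chain : ∀ i, ∃ j, 0 < ∑ k, M j k ∧ ReflTransGen (fun a b => M a b < 0) i j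

namespace IsWeaklyChainedDiagDominantZMatrix

theorem nonneg_of_mulVec_nonneg (hM : IsWeaklyChainedDiagDominantZMatrix M)
    (hMx : 0 ≤ M *ᵥ x) : 0 ≤ x := by
  intro i
  have : Nonempty ι := ⟨i⟩
  obtain ⟨i₀, hi₀⟩ := Finite.exists_min x
  refine le_trans (show (0 : ℝ) ≤ x i₀ from ?_) (hi₀ i)
  by_contra! hneg
  obtain ⟨j, hj, hpath⟩ := hM.chain i₀
  have hxj := apply_eq_of_forall_le_of_reflTransGen hM.offDiag_nonpos hM.rowSum_nonneg hMx hi₀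
    hneg.le hpath
  rw [← hxj] at hi₀ hneg
  have hMxj : 0 ≤ (M *ᵥ x) j := hMx j
  nlinarith [mulVec_apply_le_of_forall_le hM.offDiag_nonpos hi₀]

theorem mulVec_injective (hM : IsWeaklyChainedDiagDominantZMatrix M) :
    Function.Injective M.mulVec := by
  intro a b hab
  have hker : M *ᵥ (a - b) = 0 := by rw [mulVec_sub, hab, sub_self]
  have hle : 0 ≤ a - b := hM.nonneg_of_mulVec_nonneg hker.ge
  have hge : 0 ≤ -(a - b) := hM.nonneg_of_mulVec_nonneg (by rw [mulVec_neg, hker, neg_zero])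
  exact sub_eq_zero.1 (le_antisymm (neg_nonneg.1 hge) hle)

variable [DecidableEq ι]

theorem isUnit (hM : IsWeaklyChainedDiagDominantZMatrix M) : IsUnit M :=
  mulVec_injective_iff_isUnit.1 hM.mulVec_injective

theorem mulVec_col_inv (hM : IsWeaklyChainedDiagDominantZMatrix M) (j : ι) :
    M *ᵥ M⁻¹.col j = Pi.single j 1 := by
  rw [← mulVec_single_one, mulVec_mulVec, mul_nonsing_inv _ ((isUnit_iff_isUnit_det M).1 hM.isUnit),
    one_mulVec]

theorem inv_apply_nonneg (hM : IsWeaklyChainedDiagDominantZMatrix M) (i j : ι) : 0 ≤ M⁻¹ i j :=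
  hM.nonneg_of_mulVec_nonneg (x := M⁻¹.col j)
    (hM.mulVec_col_inv j ▸ Pi.single_nonneg.2 zero_le_one) i

theorem inv_apply_pos_of_reflTransGen (hM : IsWeaklyChainedDiagDominantZMatrix M)
    (hij : ReflTransGen (fun a b => M a b < 0) i j) : 0 < M⁻¹ i j := by
  have hMx := hM.mulVec_col_inv j
  have hx (k : ι) : 0 ≤ M⁻¹.col j k := hM.inv_apply_nonneg k j
  refine (hx i).lt_of_ne' fun hxi => ?_
  have hmin (k : ι) : M⁻¹.col j i ≤ M⁻¹.col j k := hxi ▸ hx k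
  have hxj := apply_eq_of_forall_le_of_reflTransGen hM.offDiag_nonpos hM.rowSum_nonneg
    (hMx ▸ Pi.single_nonneg.2 zero_le_one) hmin hxi.le hij
  have := mulVec_apply_le_of_forall_le (i := j) hM.offDiag_nonpos (hxj ▸ hmin)
  rw [hMx, hxj, hxi] at this
  norm_num at this

end IsWeaklyChainedDiagDominantZMatrix

theorem inv_apply_eq_zero_of_ne [DecidableEq ι] {β : Type*} (b : ι → β)
    (hM : ∀ k l, b k ≠ b l → M k l = 0) {k l : ι} (hkl : b k ≠ b l) : M⁻¹ k l = 0 := by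
  classical
  -- `M` commutes with the projection `P` onto the block of `l`, hence so does `M⁻¹`.
  let P : Matrix ι ι ℝ := diagonal fun k => if b k = b l then 1 else 0
  have hMP : M * P = P * M := by
    ext k' l'
    rw [mul_diagonal, diagonal_mul]
    by_cases h : b k' = b l'
    · simp [h]
    · simp [hM k' l' h]
  have hinvP : M⁻¹ * P = P * M⁻¹ := by
    by_cases hdet : IsUnit M.det
    · calc M⁻¹ * P = M⁻¹ * P * (M * M⁻¹) := by rw [mul_nonsing_inv _ hdet, Matrix.mul_one]
        _ = M⁻¹ * (M * P) * M⁻¹ := by simp only [hMP, Matrix.mul_assoc]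
        _ = P * M⁻¹ := by rw [← Matrix.mul_assoc M⁻¹, nonsing_inv_mul _ hdet, Matrix.one_mul]
    · simp [nonsing_inv_apply_not_isUnit _ hdet]
  have := congrFun₂ hinvP k l
  rw [mul_diagonal, diagonal_mul] at this
  simpa [P, hkl] using this

end Matrix

namespace SISMobility

variable {n m : ℕ} {Q : Fin m → Matrix (Fin n) (Fin n) ℝ} {x : Idx n m → ℝ}

theorem Lmat_apply_of_fst_ne {k l : Idx n m} (h : k.1 ≠ l.1) : Lmat Q x k l = 0 := if_neg h

theorem Lmat_apply_of_snd_ne (α : Fin m) {i j : Fin n} (h : i ≠ j) :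
    Lmat Q x (α, i) (α, j) = -(Q α j i * x (α, j) / x (α, i)) := by
  simp [Lmat, h]

theorem sum_Lmat_apply (k : Idx n m) : ∑ l, Lmat Q x k l = 0 := by
  obtain ⟨α, i⟩ := k
  rw [Fintype.sum_prod_type, Finset.sum_eq_single α
    (fun γ _ h => Finset.sum_eq_zero fun j _ => Lmat_apply_of_fst_ne (Ne.symm h)) (by simp),
    ← Finset.add_sum_erase _ _ (mem_univ i), ← Finset.filter_ne',
    Finset.sum_congr rfl fun j hj => Lmat_apply_of_snd_ne α (Finset.mem_filter.1 hj).2.symm]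
  simp [Lmat, Finset.filter_ne']

theorem Lmat_apply_nonpos_of_ne (hQ : ∀ α, IsGenerator (Q α)) (hx : ∀ k, 0 < x k)
    {k l : Idx n m} (hkl : k ≠ l) : Lmat Q x k l ≤ 0 := by
  obtain ⟨α, i⟩ := k
  obtain ⟨γ, j⟩ := l
  rcases eq_or_ne α γ with rfl | hαγ
  · have hij : i ≠ j := fun h => hkl (h ▸ rfl)
    have := (hQ α).1 j i hij.symm
    rw [Lmat_apply_of_snd_ne α hij, neg_nonpos]
    exact div_nonneg (mul_nonneg this (hx _).le) (hx _).le
  · exact (Lmat_apply_of_fst_ne hαγ).le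

theorem Lmat_apply_neg (hx : ∀ k, 0 < x k) (α : Fin m) {i j : Fin n} (hij : i ≠ j)
    (hQ : 0 < Q α j i) : Lmat Q x (α, i) (α, j) < 0 := by
  rw [Lmat_apply_of_snd_ne α hij, neg_neg_iff_pos]
  exact div_pos (mul_pos hQ (hx _)) (hx _)

theorem Lmat_add_Dmat_apply_of_ne (δ : Fin n → ℝ) {k l : Idx n m} (hkl : k ≠ l) :
    (Lmat Q x + Dmat n m δ) k l = Lmat Q x k l := by
  simp [Dmat, hkl]

theorem Lmat_add_Dmat_apply_of_fst_ne (δ : Fin n → ℝ) {k l : Idx n m} (h : k.1 ≠ l.1) :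
    (Lmat Q x + Dmat n m δ) k l = 0 := by
  rw [Lmat_add_Dmat_apply_of_ne δ (fun e => h (congrArg Prod.fst e)), Lmat_apply_of_fst_ne h]

theorem sum_Lmat_add_Dmat_apply (δ : Fin n → ℝ) (k : Idx n m) :
    ∑ l, (Lmat Q x + Dmat n m δ) k l = δ k.2 := by
  simp [Matrix.add_apply, Finset.sum_add_distrib, sum_Lmat_apply, Dmat, Matrix.diagonal_apply]

theorem reflTransGen_Lmat_add_Dmat_neg (δ : Fin n → ℝ) (hx : ∀ k, 0 < x k) {α : Fin m}
    (hQ : StronglyConnected (Q α)) (i j : Fin n) :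
    ReflTransGen (fun k l => (Lmat Q x + Dmat n m δ) k l < 0) (α, i) (α, j) := by
  refine ReflTransGen.lift (fun a => (α, a)) (fun a b hab => ?_) _ _ (hQ j i).swap
  obtain ⟨hba, hQba⟩ := hab
  rw [Function.onFun, Lmat_add_Dmat_apply_of_ne δ (fun h => hba (Prod.ext_iff.1 h).2.symm)]
  exact Lmat_apply_neg hx α hba.symm hQba

theorem isWeaklyChainedDiagDominantZMatrix_Lmat_add_Dmat (hQgen : ∀ α, IsGenerator (Q α))
    (hQirr : ∀ α, StronglyConnected (Q α)) (hx : ∀ k, 0 < x k) {δ : Fin n → ℝ}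
    (hδ : ∀ i, 0 ≤ δ i) (hδpos : ∃ i, 0 < δ i) :
    IsWeaklyChainedDiagDominantZMatrix (Lmat Q x + Dmat n m δ) where
  offDiag_nonpos _ _ hkl :=
    (Lmat_add_Dmat_apply_of_ne δ hkl).trans_le (Lmat_apply_nonpos_of_ne hQgen hx hkl)
  rowSum_nonneg k := (sum_Lmat_add_Dmat_apply δ k).symm ▸ hδ k.2
  chain k := by
    obtain ⟨i₀, hi₀⟩ := hδpos
    exact ⟨(k.1, i₀), (sum_Lmat_add_Dmat_apply δ _).symm ▸ hi₀,
      reflTransGen_Lmat_add_Dmat_neg δ hx (hQirr k.1) k.2 i₀⟩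

theorem Fmat_nonneg (hx : ∀ k, 0 ≤ x k) (k l : Idx n m) : 0 ≤ Fmat x k l := by
  unfold Fmat
  split_ifs
  exacts [div_nonneg (hx _) (sum_nonneg fun η _ => hx _), le_rfl]

theorem Fmat_apply_pos (hx : ∀ k, 0 < x k) {k l : Idx n m} (h : l.2 = k.2) : 0 < Fmat x k l := by
  rw [Fmat, if_pos h]
  exact div_pos (hx _) (sum_pos (fun η _ => hx _) ⟨l.1, mem_univ _⟩)

end SISMobility

open SISMobility

theorem A_block_positive_and_AF_positive_general
    (n m : ℕ)
    (Q : Fin m → Matrix (Fin n) (Fin n) ℝ)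
    (hQgen : ∀ α, IsGenerator (Q α)) (hQirr : ∀ α, StronglyConnected (Q α))
    (β δ : Fin n → ℝ) (hβ : ∀ i, 0 < β i) (hδ : ∀ i, 0 ≤ δ i)
    (hδpos : ∃ i, 0 < δ i)
    (vα : Fin m → Fin n → ℝ) (hvαpos : ∀ α i, 0 < vα α i)
    (Npop : Fin m → ℝ) (hNpop : ∀ α, 0 < Npop α)
    (v : Idx n m → ℝ) (hv : ∀ k, v k = Npop k.1 * vα k.1 k.2) :
    IsUnit (Lmat Q v + Dmat n m δ).det ∧
    (∀ k l : Idx n m, k.1 ≠ l.1 →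
      ((Lmat Q v + Dmat n m δ)⁻¹ * Bmat n m β) k l = 0) ∧
    (∀ k l : Idx n m, k.1 = l.1 →
      0 < ((Lmat Q v + Dmat n m δ)⁻¹ * Bmat n m β) k l) ∧
    (∀ k l : Idx n m,
      0 < ((Lmat Q v + Dmat n m δ)⁻¹ * Bmat n m β * Fmat v) k l) := by
  have hv_pos (k : Idx n m) : 0 < v k := hv k ▸ mul_pos (hNpop k.1) (hvαpos k.1 k.2)
  have hE := isWeaklyChainedDiagDominantZMatrix_Lmat_add_Dmat (δ := δ) hQgen hQirr hv_pos hδ hδpos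
  set E := Lmat Q v + Dmat n m δ
  have hA (k l : Idx n m) : (E⁻¹ * Bmat n m β) k l = E⁻¹ k l * β l.2 := mul_diagonal _ _ _ _
  have hA_pos (k l : Idx n m) (h : k.1 = l.1) : 0 < (E⁻¹ * Bmat n m β) k l := by
    obtain ⟨α, i⟩ := k
    obtain ⟨γ, j⟩ := l
    obtain rfl : α = γ := h
    exact hA _ _ ▸ mul_pos (hE.inv_apply_pos_of_reflTransGen
      (reflTransGen_Lmat_add_Dmat_neg δ hv_pos (hQirr α) i j)) (hβ j)
  refine ⟨(isUnit_iff_isUnit_det E).1 hE.isUnit, fun k l h => ?_, hA_pos, fun k l => ?_⟩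
  · rw [hA, inv_apply_eq_zero_of_ne Prod.fst (fun _ _ => Lmat_add_Dmat_apply_of_fst_ne δ) h,
      zero_mul]
  · have hA_nonneg (c : Idx n m) : 0 ≤ (E⁻¹ * Bmat n m β) k c :=
      hA k c ▸ mul_nonneg (hE.inv_apply_nonneg k c) (hβ c.2).le
    exact sum_pos' (fun c _ => mul_nonneg (hA_nonneg c) (Fmat_nonneg (hv_pos · |>.le) c l))
      ⟨(k.1, l.2), mem_univ _, mul_pos (hA_pos k _ rfl) (Fmat_apply_pos hv_pos rfl)⟩

/-- if `δ_i > 0` for at least one patch, then `L* + D` is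
invertible, `A = (L* + D)⁻¹ B` is block-diagonal with entrywise positive diagonal
blocks, and `A F*` is entrywise positive (hence an irreducible nonnegative matrix). -/
theorem A_block_positive_and_AF_positive
    (n m : ℕ) (hn : 2 ≤ n) (hm : 1 ≤ m)
    (Q : Fin m → Matrix (Fin n) (Fin n) ℝ)
    (hQgen : ∀ α, IsGenerator (Q α)) (hQirr : ∀ α, StronglyConnected (Q α))
    (β δ : Fin n → ℝ) (hβ : ∀ i, 0 < β i) (hδ : ∀ i, 0 ≤ δ i)
    (hδpos : ∃ i, 0 < δ i)
    (vα : Fin m → Fin n → ℝ) (hvαpos : ∀ α i, 0 < vα α i)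
    (hvαnorm : ∀ α, ∑ i, vα α i = 1)
    (hvαeig : ∀ α i, ∑ j, Q α j i * vα α j = 0)
    (Npop : Fin m → ℝ) (hNpop : ∀ α, 0 < Npop α)
    (v : Idx n m → ℝ) (hv : ∀ k, v k = Npop k.1 * vα k.1 k.2) :
    IsUnit (Lmat Q v + Dmat n m δ).det ∧
    (∀ k l : Idx n m, k.1 ≠ l.1 →
      ((Lmat Q v + Dmat n m δ)⁻¹ * Bmat n m β) k l = 0) ∧
    (∀ k l : Idx n m, k.1 = l.1 →
      0 < ((Lmat Q v + Dmat n m δ)⁻¹ * Bmat n m β) k l) ∧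
    (∀ k l : Idx n m,
      0 < ((Lmat Q v + Dmat n m δ)⁻¹ * Bmat n m β * Fmat v) k l) :=
  A_block_positive_and_AF_positive_general n m Q hQgen hQirr β δ hβ hδ hδpos vα hvαpos Npop hNpop v
    hv
end

section
/- Consider the SIS model under multi-layer Markovian mobility, with F* = F(v), L* = L(v), and assume δ_i > 0 for at least one patch i. Set A = (L* + D)^{-1} B, M = I − F*, and for p ∈ [0,1]^{nm} define H(p) = (I + A(diag(p) + (I − diag(p)) M))^{-1} A p. Then for every p ∈ [0,1]^{nm}, H(p) ≤ 1 entrywise (where 1 denotes the all-ones vector); in particular H maps [0,1]^{nm} into itself. -/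
/-!
`y = H p` solves `(L* + D) y + B (diag p + (I - diag p) M) y = B p`, which in row `k` reads
`(L* y)_k + δ_k y_k + β_k (y_k - (1 - p_k) (F* y)_k) = β_k p_k`.
This is a discrete maximum principle. At an entry where `y` is maximal and `≥ 1`, `(L* y)_k ≥ 0`
and `(F* y)_k ≤ y_k` (`F*` averages), so the last term is already `≥ β_k p_k`; hence
`δ_k y_k = 0` and `(L* y)_k = 0`, and the latter spreads the maximum to every patch `j` of the
same class with `q_{jk} > 0`. By irreducibility the maximum reaches a patch with
`δ_i > 0`, a contradiction; hence even `H p < 1`.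
-/

open Matrix Finset Filter

open SISMobility

namespace SISMobility

theorem StronglyConnected.mem_of_mem {n : ℕ} {Q : Matrix (Fin n) (Fin n) ℝ}
    (hQ : StronglyConnected Q) {S : Set (Fin n)}
    (hS : ∀ a b, a ≠ b → 0 < Q a b → b ∈ S → a ∈ S) {b : Fin n} (hb : b ∈ S) (a : Fin n) :
    a ∈ S :=
  Relation.ReflTransGen.head_induction_on (hQ a b) hb fun hac _ hc => hS _ _ hac.1 hac.2 hc

section Matrices

variable {ι R : Type*} [Fintype ι] [DecidableEq ι] [CommRing R]

theorem mulVec_inv_one_add_mul {N B A P : Matrix ι ι R} (hA : N * A = B)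
    (hT : IsUnit (1 + A * P).det) (p : ι → R) :
    N *ᵥ ((1 + A * P)⁻¹ *ᵥ A *ᵥ p) + B *ᵥ P *ᵥ ((1 + A * P)⁻¹ *ᵥ A *ᵥ p) = B *ᵥ p := by
  set y := (1 + A * P)⁻¹ *ᵥ A *ᵥ p
  have hy : (1 + A * P) *ᵥ y = A *ᵥ p := by
    rw [mulVec_mulVec, mul_nonsing_inv _ hT, one_mulVec]
  rw [add_mulVec, one_mulVec, ← mulVec_mulVec] at hy
  rw [← hA, ← mulVec_mulVec, ← mulVec_mulVec, ← mulVec_add, hy, mulVec_mulVec]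

theorem diagonal_add_one_sub_diagonal_mul_mulVec_apply (p y : ι → R) (M : Matrix ι ι R)
    (k : ι) :
    ((diagonal p + (1 - diagonal p) * M) *ᵥ y) k = p k * y k + (1 - p k) * (M *ᵥ y) k := by
  simp [add_mulVec, sub_mul, sub_mulVec, mulVec_diagonal, ← mulVec_mulVec]

end Matrices

variable {n m : ℕ}

theorem Lmat_mulVec_apply (Q : Fin m → Matrix (Fin n) (Fin n) ℝ) (x y : Idx n m → ℝ)
    (k : Idx n m) :
    (Lmat Q x *ᵥ y) k = ∑ j ∈ univ.filter (· ≠ k.2),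
      Q k.1 j k.2 * x (k.1, j) / x k * (y k - y (k.1, j)) := by
  obtain ⟨α, i⟩ := k
  simp only [mulVec, dotProduct, Lmat, Fintype.sum_prod_type]
  rw [Finset.sum_eq_single α (fun γ _ hγ => by simp [Ne.symm hγ]) (by simp),
    Fintype.sum_eq_add_sum_compl i, Finset.compl_singleton, ← Finset.filter_ne']
  have hoff : ∀ j ∈ univ.filter (· ≠ i),
      (if α = α then if i = j then ∑ l ∈ univ.filter (· ≠ i), Q α l i * x (α, l) / x (α, i)
        else -(Q α j i * x (α, j) / x (α, i)) else 0) * y (α, j) =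
      -(Q α j i * x (α, j) / x (α, i) * y (α, j)) := fun j hj => by
    rw [if_pos rfl, if_neg (Finset.mem_filter.mp hj).2.symm, neg_mul]
  rw [Finset.sum_congr rfl hoff, if_pos rfl, if_pos rfl, Finset.sum_neg_distrib, Finset.sum_mul,
    ← sub_eq_add_neg, ← Finset.sum_sub_distrib]
  simp only [mul_sub]

theorem Fmat_mulVec_apply (x y : Idx n m → ℝ) (k : Idx n m) :
    (Fmat x *ᵥ y) k = ∑ η, x (η, k.2) / (∑ τ, x (τ, k.2)) * y (η, k.2) := by
  simp only [mulVec, dotProduct, Fmat, Fintype.sum_prod_type]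
  simp [Finset.sum_ite_eq']

theorem Fmat_mulVec_le {x y : Idx n m → ℝ} (hx : ∀ k, 0 < x k) {c : ℝ} (hy : ∀ l, y l ≤ c)
    (k : Idx n m) : (Fmat x *ᵥ y) k ≤ c := by
  have hS : 0 < ∑ τ, x (τ, k.2) := Finset.sum_pos (fun τ _ => hx _) ⟨k.1, mem_univ _⟩
  calc (Fmat x *ᵥ y) k = ∑ η, x (η, k.2) / (∑ τ, x (τ, k.2)) * y (η, k.2) :=
        Fmat_mulVec_apply x y k
    _ ≤ ∑ η, x (η, k.2) / (∑ τ, x (τ, k.2)) * c :=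
        Finset.sum_le_sum fun η _ => mul_le_mul_of_nonneg_left (hy _) (div_nonneg (hx _).le hS.le)
    _ = c := by rw [← Finset.sum_mul, ← Finset.sum_div, div_self hS.ne', one_mul]

section MaximumPrinciple

variable {Q : Fin m → Matrix (Fin n) (Fin n) ℝ} {x y : Idx n m → ℝ}

theorem Lmat_mulVec_term_nonneg (hQ : ∀ α i j, i ≠ j → 0 ≤ Q α i j) (hx : ∀ k, 0 < x k)
    {k : Idx n m} (hk : ∀ l, y l ≤ y k) {j : Fin n} (hj : j ≠ k.2) :
    0 ≤ Q k.1 j k.2 * x (k.1, j) / x k * (y k - y (k.1, j)) :=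
  mul_nonneg (div_nonneg (mul_nonneg (hQ _ _ _ hj) (hx _).le) (hx k).le)
    (sub_nonneg.mpr (hk _))

theorem Lmat_mulVec_nonneg_of_isMax (hQ : ∀ α i j, i ≠ j → 0 ≤ Q α i j) (hx : ∀ k, 0 < x k)
    {k : Idx n m} (hk : ∀ l, y l ≤ y k) : 0 ≤ (Lmat Q x *ᵥ y) k := by
  rw [Lmat_mulVec_apply]
  exact Finset.sum_nonneg fun j hj =>
    Lmat_mulVec_term_nonneg hQ hx hk (Finset.mem_filter.mp hj).2

theorem eq_of_Lmat_mulVec_eq_zero (hQ : ∀ α i j, i ≠ j → 0 ≤ Q α i j) (hx : ∀ k, 0 < x k)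
    {k : Idx n m} (hk : ∀ l, y l ≤ y k) (h0 : (Lmat Q x *ᵥ y) k = 0) {j : Fin n}
    (hj : j ≠ k.2) (hQj : 0 < Q k.1 j k.2) : y (k.1, j) = y k := by
  rw [Lmat_mulVec_apply, Finset.sum_eq_zero_iff_of_nonneg fun j hj =>
    Lmat_mulVec_term_nonneg hQ hx hk (Finset.mem_filter.mp hj).2] at h0
  have hc : 0 < Q k.1 j k.2 * x (k.1, j) / x k := div_pos (mul_pos hQj (hx _)) (hx k)
  have := h0 j (Finset.mem_filter.mpr ⟨mem_univ _, hj⟩)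
  linarith [(mul_eq_zero.mp this).resolve_left hc.ne']

variable {β δ : Fin n → ℝ} {p : Idx n m → ℝ}

theorem isMax_spreads_of_one_le (hQ : ∀ α i j, i ≠ j → 0 ≤ Q α i j) (hβ : ∀ i, 0 ≤ β i)
    (hδ : ∀ i, 0 ≤ δ i) (hx : ∀ k, 0 < x k) (hp : ∀ k, p k ∈ Set.Icc (0 : ℝ) 1)
    (hy : ∀ k, (Lmat Q x *ᵥ y) k + δ k.2 * y k + β k.2 * (y k - (1 - p k) * (Fmat x *ᵥ y) k)
      = β k.2 * p k)
    {k : Idx n m} (hk : ∀ l, y l ≤ y k) (h1 : 1 ≤ y k) :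
    δ k.2 = 0 ∧ ∀ j, j ≠ k.2 → 0 < Q k.1 j k.2 → y (k.1, j) = y k := by
  have hL := Lmat_mulVec_nonneg_of_isMax hQ hx hk
  have hF := Fmat_mulVec_le hx hk k
  obtain ⟨hp0, hp1⟩ := hp k
  have hinf : β k.2 * p k ≤ β k.2 * (y k - (1 - p k) * (Fmat x *ᵥ y) k) :=
    mul_le_mul_of_nonneg_left (by nlinarith) (hβ _)
  have hδy : δ k.2 * y k = 0 := by nlinarith [hy k, mul_nonneg (hδ k.2) (by linarith : 0 ≤ y k)]
  have hL0 : (Lmat Q x *ᵥ y) k = 0 := by linarith [hy k]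
  exact ⟨(mul_eq_zero.mp hδy).resolve_right (by linarith),
    fun j hj hQj => eq_of_Lmat_mulVec_eq_zero hQ hx hk hL0 hj hQj⟩

theorem lt_one_of_Hfun_equation (hQ : ∀ α i j, i ≠ j → 0 ≤ Q α i j)
    (hQirr : ∀ α, StronglyConnected (Q α)) (hβ : ∀ i, 0 ≤ β i) (hδ : ∀ i, 0 ≤ δ i)
    (hδpos : ∃ i, 0 < δ i) (hx : ∀ k, 0 < x k) (hp : ∀ k, p k ∈ Set.Icc (0 : ℝ) 1)
    (hy : ∀ k, (Lmat Q x *ᵥ y) k + δ k.2 * y k + β k.2 * (y k - (1 - p k) * (Fmat x *ᵥ y) k)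
      = β k.2 * p k)
    (k : Idx n m) : y k < 1 := by
  by_contra! h
  obtain ⟨K, -, hK⟩ := Finset.exists_max_image univ y ⟨k, mem_univ _⟩
  have hmax : ∀ l, y l ≤ y K := fun l => hK l (mem_univ l)
  have spread := fun i (hi : y (K.1, i) = y K) =>
    isMax_spreads_of_one_le hQ hβ hδ hx hp hy (k := (K.1, i)) (hi ▸ hmax) (hi ▸ h.trans (hmax k))
  obtain ⟨i₀, hi₀⟩ := hδpos
  have hmax_i₀ : y (K.1, i₀) = y K := (hQirr K.1).mem_of_mem (S := {i | y (K.1, i) = y K})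
    (fun a b hab hQab hb => ((spread b hb).2 a hab hQab).trans hb) rfl i₀
  linarith [(spread i₀ hmax_i₀).1]

end MaximumPrinciple

theorem Hfun_equation_apply {Q : Fin m → Matrix (Fin n) (Fin n) ℝ} {β δ : Fin n → ℝ}
    {x p : Idx n m → ℝ} {A M : Matrix (Idx n m) (Idx n m) ℝ}
    (hA : (Lmat Q x + Dmat n m δ) * A = Bmat n m β)
    (hT : IsUnit (1 + A * (diagonal p + (1 - diagonal p) * M)).det) (hM : M = 1 - Fmat x)
    (k : Idx n m) :
    (Lmat Q x *ᵥ Hfun A M p) k + δ k.2 * Hfun A M p k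
      + β k.2 * (Hfun A M p k - (1 - p k) * (Fmat x *ᵥ Hfun A M p) k) = β k.2 * p k := by
  subst hM
  have := congrFun (mulVec_inv_one_add_mul hA hT p) k
  rw [Pi.add_apply, add_mulVec, Pi.add_apply, Dmat, Bmat, mulVec_diagonal, mulVec_diagonal,
    mulVec_diagonal, diagonal_add_one_sub_diagonal_mul_mulVec_apply, sub_mulVec, one_mulVec,
    Pi.sub_apply] at this
  unfold Hfun
  linear_combination this

end SISMobility

theorem Hfun_le_one_general
    (n m : ℕ)
    (Q : Fin m → Matrix (Fin n) (Fin n) ℝ)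
    (hQgen : ∀ α, IsGenerator (Q α)) (hQirr : ∀ α, StronglyConnected (Q α))
    (β δ : Fin n → ℝ) (hβ : ∀ i, 0 < β i) (hδ : ∀ i, 0 ≤ δ i)
    (hδpos : ∃ i, 0 < δ i)
    (vα : Fin m → Fin n → ℝ) (hvαpos : ∀ α i, 0 < vα α i)
    (Npop : Fin m → ℝ) (hNpop : ∀ α, 0 < Npop α)
    (v : Idx n m → ℝ) (hv : ∀ k, v k = Npop k.1 * vα k.1 k.2)
    (A M : Matrix (Idx n m) (Idx n m) ℝ)
    (hA : A = (Lmat Q v + Dmat n m δ)⁻¹ * Bmat n m β)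
    (hM : M = 1 - Fmat v) :
    ∀ p : Idx n m → ℝ, (∀ k, p k ∈ Set.Icc (0 : ℝ) 1) →
      ∀ k, Hfun A M p k ≤ 1 := by
  intro p hp k
  have hv_pos : ∀ k, 0 < v k := fun k => hv k ▸ mul_pos (hNpop _) (hvαpos _ _)
  -- If either inverse does not exist, Mathlib's `⁻¹` is `0`, and then `H p = 0`.
  by_cases hLD : IsUnit (Lmat Q v + Dmat n m δ).det
  swap
  · simp [Hfun, hA, nonsing_inv_apply_not_isUnit _ hLD]
  by_cases hT : IsUnit (1 + A * (diagonal p + (1 - diagonal p) * M)).det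
  swap
  · simp [Hfun, nonsing_inv_apply_not_isUnit _ hT]
  have hLDA : (Lmat Q v + Dmat n m δ) * A = Bmat n m β := by
    rw [hA, ← Matrix.mul_assoc, mul_nonsing_inv _ hLD, Matrix.one_mul]
  exact (lt_one_of_Hfun_equation (fun α => (hQgen α).1) hQirr (fun i => (hβ i).le) hδ hδpos
    hv_pos hp (Hfun_equation_apply hLDA hT hM) k).le

/-- with `A = (L* + D)⁻¹ B`, `M = I − F*` and
`H(p) = (I + A(diag p + (I − diag p) M))⁻¹ A p`, for every `p ∈ [0,1]^{nm}` one has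
`H(p) ≤ 1` entrywise; in particular `H` maps `[0,1]^{nm}` into itself. -/
theorem Hfun_le_one
    (n m : ℕ) (hn : 2 ≤ n) (hm : 1 ≤ m)
    (Q : Fin m → Matrix (Fin n) (Fin n) ℝ)
    (hQgen : ∀ α, IsGenerator (Q α)) (hQirr : ∀ α, StronglyConnected (Q α))
    (β δ : Fin n → ℝ) (hβ : ∀ i, 0 < β i) (hδ : ∀ i, 0 ≤ δ i)
    (hδpos : ∃ i, 0 < δ i)
    (vα : Fin m → Fin n → ℝ) (hvαpos : ∀ α i, 0 < vα α i)
    (hvαnorm : ∀ α, ∑ i, vα α i = 1)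
    (hvαeig : ∀ α i, ∑ j, Q α j i * vα α j = 0)
    (Npop : Fin m → ℝ) (hNpop : ∀ α, 0 < Npop α)
    (v : Idx n m → ℝ) (hv : ∀ k, v k = Npop k.1 * vα k.1 k.2)
    (A M : Matrix (Idx n m) (Idx n m) ℝ)
    (hA : A = (Lmat Q v + Dmat n m δ)⁻¹ * Bmat n m β)
    (hM : M = 1 - Fmat v) :
    ∀ p : Idx n m → ℝ, (∀ k, p k ∈ Set.Icc (0 : ℝ) 1) →
      ∀ k, Hfun A M p k ≤ 1 :=
  Hfun_le_one_general n m Q hQgen hQirr β δ hβ hδ hδpos vα hvαpos Npop hNpop v hv A M hA hM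
end
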